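/- arXiv:cs/0205014 — 3 statements merged into one kernel-verified Lean document; each statement's English description precedes it below -/
import Mathlib

section
/- Let A be a partial approximation operator on L^c and (a,b) an A-prudent pair. Then (a,b) ≤_p (c↓(b), c↑(a)), and the pair (c↓(b), c↑(a)) is itself A-reliable. -/
variable {L : Type*} [CompleteLattice L]

/-- The precision ordering on pairs of lattice elements:
`(x, y) ≤ₚ (x', y')` iff `x ≤ x'` and `y' ≤ y`. -/
def precLE (p q : L × L) : Prop := p.1 ≤ q.1 ∧ q.2 ≤ p.2

/-- A pair `(x, y)` is consistent if `x ≤ y`. -/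
def ConsistentPair (p : L × L) : Prop := p.1 ≤ p.2

/-- A partial approximation operator on the consistent pairs `L^c` of a complete
lattice `L`, given by its two component functions `A1`, `A2`.  It maps consistent
pairs to consistent pairs, is `≤ₚ`-monotone on consistent pairs, and has equal
components on the diagonal. -/
structure PartialApprox (L : Type*) [CompleteLattice L] where
  A1 : L → L → L
  A2 : L → L → L
  cons : ∀ x y : L, x ≤ y → A1 x y ≤ A2 x y
  mono1 : ∀ x y x' y' : L, x ≤ y → x' ≤ y' → x ≤ x' → y' ≤ y → A1 x y ≤ A1 x' y'
  mono2 : ∀ x y x' y' : L, x ≤ y → x' ≤ y' → x ≤ x' → y' ≤ y → A2 x' y' ≤ A2 x y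
  diag : ∀ x : L, A1 x x = A2 x x

namespace PartialApprox

/-- `(a, b)` is `A`-reliable if it is consistent and `(a, b) ≤ₚ A(a, b)`. -/
def reliable (A : PartialApprox L) (a b : L) : Prop :=
  a ≤ b ∧ a ≤ A.A1 a b ∧ A.A2 a b ≤ b

/-- The least fixpoint of `A.A1 (·, b)` on the interval `[⊥, b]`
(for `A`-reliable pairs this least fixpoint exists and equals this `sInf`). -/
def cdown (A : PartialApprox L) (b : L) : L :=
  sInf {z | z ≤ b ∧ A.A1 z b = z}

/-- The least fixpoint of `A.A2 (a, ·)` on the interval `[a, ⊤]`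
(for `A`-reliable pairs this least fixpoint exists and equals this `sInf`). -/
def cup (A : PartialApprox L) (a : L) : L :=
  sInf {z | a ≤ z ∧ A.A2 a z = z}

/-- `(a, b)` is `A`-prudent if it is `A`-reliable and `a ≤ c↓(b)`. -/
def prudent (A : PartialApprox L) (a b : L) : Prop :=
  A.reliable a b ∧ a ≤ A.cdown b

/-- `(x, y)` is a stable fixpoint of `A` if it is `A`-reliable, `x = c↓(y)`
and `y = c↑(x)`. -/
def stableFix (A : PartialApprox L) (x y : L) : Prop :=
  A.reliable x y ∧ x = A.cdown y ∧ y = A.cup x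

end PartialApprox

/-! `c↓(b)` and `c↑(a)` are least fixpoints of monotone self-maps of the intervals `[⊥, b]`
and `[a, b]`, so by Knaster–Tarski they are least prefixpoints there.  The diagonal condition
makes `c↑(a) ≤ b` a prefixpoint of `A¹(·, b)`, whence `c↓(b) ≤ c↑(a)`; the rest is
monotonicity of `A` and the two fixpoint equations. -/

open Set Function

section KnasterTarski

variable {f : L → L} {a b : L}

theorem isLeast_sInf_prefixedPoints_Icc (hab : a ≤ b) (hf : MonotoneOn f (Icc a b))
    (hmaps : MapsTo f (Icc a b) (Icc a b)) :
    IsLeast {z ∈ Icc a b | f z ≤ z} (sInf {z ∈ Icc a b | f z ≤ z}) := by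
  have hb : b ∈ Icc a b := right_mem_Icc.2 hab
  have hu : sInf {z ∈ Icc a b | f z ≤ z} ∈ Icc a b :=
    ⟨le_sInf fun z hz => hz.1.1, sInf_le ⟨hb, (hmaps hb).2⟩⟩
  exact ⟨⟨hu, le_sInf fun z hz => (hf hu hz.1 (sInf_le hz)).trans hz.2⟩, fun z hz => sInf_le hz⟩

theorem isFixedPt_sInf_prefixedPoints_Icc (hab : a ≤ b) (hf : MonotoneOn f (Icc a b))
    (hmaps : MapsTo f (Icc a b) (Icc a b)) :
    IsFixedPt f (sInf {z ∈ Icc a b | f z ≤ z}) := by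
  obtain ⟨⟨hu, hpre⟩, hleast⟩ := isLeast_sInf_prefixedPoints_Icc hab hf hmaps
  exact le_antisymm hpre (hleast ⟨hmaps hu, hf (hmaps hu) hu hpre⟩)

end KnasterTarski

namespace PartialApprox

variable (A : PartialApprox L) {a b : L}

theorem A1_self_le_of_reliable (h : A.reliable a b) : A.A1 b b ≤ b :=
  calc A.A1 b b = A.A2 b b := A.diag b
    _ ≤ A.A2 a b := A.mono2 a b b b h.1 le_rfl h.1 le_rfl
    _ ≤ b := h.2.2

theorem monotoneOn_A1_left (b : L) : MonotoneOn (A.A1 · b) (Iic b) :=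
  fun _ hx _ hy hxy => A.mono1 _ b _ b hx hy hxy le_rfl

theorem monotoneOn_A2_right (a : L) : MonotoneOn (A.A2 a ·) (Ici a) :=
  fun _ hx _ hy hxy => A.mono2 a _ a _ hy hx le_rfl hxy

theorem mapsTo_A1_left (hb : A.A1 b b ≤ b) : MapsTo (A.A1 · b) (Icc ⊥ b) (Icc ⊥ b) :=
  fun _ hz => ⟨bot_le, (A.monotoneOn_A1_left b hz.2 le_rfl hz.2).trans hb⟩

theorem mapsTo_A2_right (h : A.reliable a b) : MapsTo (A.A2 a ·) (Icc a b) (Icc a b) := by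
  obtain ⟨hab, ha, hb⟩ := h
  refine fun z hz => ⟨?_, (A.monotoneOn_A2_right a hz.1 hab hz.2).trans hb⟩
  calc a ≤ A.A1 a b := ha
    _ ≤ A.A1 a z := A.mono1 a b a z hab hz.1 le_rfl hz.2
    _ ≤ A.A2 a z := A.cons a z hz.1

theorem cdown_eq_sInf_prefixedPoints (hb : A.A1 b b ≤ b) :
    A.cdown b = sInf {z ∈ Icc ⊥ b | A.A1 z b ≤ z} := by
  have hmono := (A.monotoneOn_A1_left b).mono (Icc_subset_Iic_self : Icc ⊥ b ⊆ Iic b)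
  obtain ⟨⟨hu, -⟩, hleast⟩ := isLeast_sInf_prefixedPoints_Icc bot_le hmono (A.mapsTo_A1_left hb)
  have hfix := isFixedPt_sInf_prefixedPoints_Icc bot_le hmono (A.mapsTo_A1_left hb)
  exact IsLeast.csInf_eq ⟨⟨hu.2, hfix⟩, fun z hz => hleast ⟨⟨bot_le, hz.1⟩, hz.2.le⟩⟩

theorem isLeast_cdown (hb : A.A1 b b ≤ b) :
    IsLeast {z ∈ Icc ⊥ b | A.A1 z b ≤ z} (A.cdown b) :=
  A.cdown_eq_sInf_prefixedPoints hb ▸ isLeast_sInf_prefixedPoints_Icc bot_le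
    ((A.monotoneOn_A1_left b).mono Icc_subset_Iic_self) (A.mapsTo_A1_left hb)

theorem isFixedPt_cdown (hb : A.A1 b b ≤ b) : IsFixedPt (A.A1 · b) (A.cdown b) :=
  A.cdown_eq_sInf_prefixedPoints hb ▸ isFixedPt_sInf_prefixedPoints_Icc bot_le
    ((A.monotoneOn_A1_left b).mono Icc_subset_Iic_self) (A.mapsTo_A1_left hb)

/-- A fixpoint `z ≥ a` of `A²(a, ·)` need not lie below `b`, but `z ⊓ b` is a prefixpoint
in `[a, b]`. -/
theorem cup_eq_sInf_prefixedPoints (h : A.reliable a b) :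
    A.cup a = sInf {z ∈ Icc a b | A.A2 a z ≤ z} := by
  have hmono := (A.monotoneOn_A2_right a).mono (Icc_subset_Ici_self : Icc a b ⊆ Ici a)
  obtain ⟨⟨hu, -⟩, hleast⟩ := isLeast_sInf_prefixedPoints_Icc h.1 hmono (A.mapsTo_A2_right h)
  have hfix := isFixedPt_sInf_prefixedPoints_Icc h.1 hmono (A.mapsTo_A2_right h)
  refine IsLeast.csInf_eq ⟨⟨hu.1, hfix⟩, fun z ⟨haz, hz⟩ => ?_⟩
  have hazb : a ≤ z ⊓ b := le_inf haz h.1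
  have hpre : A.A2 a (z ⊓ b) ≤ z ⊓ b :=
    le_inf ((A.monotoneOn_A2_right a hazb haz inf_le_left).trans hz.le)
      ((A.monotoneOn_A2_right a hazb h.1 inf_le_right).trans h.2.2)
  exact (hleast ⟨⟨hazb, inf_le_right⟩, hpre⟩).trans inf_le_left

theorem isLeast_cup (h : A.reliable a b) : IsLeast {z ∈ Icc a b | A.A2 a z ≤ z} (A.cup a) :=
  A.cup_eq_sInf_prefixedPoints h ▸ isLeast_sInf_prefixedPoints_Icc h.1
    ((A.monotoneOn_A2_right a).mono Icc_subset_Ici_self) (A.mapsTo_A2_right h)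

theorem isFixedPt_cup (h : A.reliable a b) : IsFixedPt (A.A2 a ·) (A.cup a) :=
  A.cup_eq_sInf_prefixedPoints h ▸ isFixedPt_sInf_prefixedPoints_Icc h.1
    ((A.monotoneOn_A2_right a).mono Icc_subset_Ici_self) (A.mapsTo_A2_right h)

end PartialApprox

theorem stmt6 (A : PartialApprox L) (a b : L) (h : A.prudent a b) :
    precLE (a, b) (A.cdown b, A.cup a) ∧ A.reliable (A.cdown b) (A.cup a) := by
  obtain ⟨hrel, had⟩ := h
  have hb := A.A1_self_le_of_reliable hrel
  obtain ⟨⟨⟨-, hdb⟩, -⟩, hdleast⟩ := A.isLeast_cdown hb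
  obtain ⟨⟨⟨hau, hub⟩, -⟩, -⟩ := A.isLeast_cup hrel
  have hdfix := A.isFixedPt_cdown hb
  have hufix := A.isFixedPt_cup hrel
  have hu_pre : A.A1 (A.cup a) b ≤ A.cup a :=
    calc A.A1 (A.cup a) b ≤ A.A1 (A.cup a) (A.cup a) := A.mono1 _ b _ _ hub le_rfl le_rfl hub
      _ = A.A2 (A.cup a) (A.cup a) := A.diag _
      _ ≤ A.A2 a (A.cup a) := A.mono2 a _ _ _ hau le_rfl hau le_rfl
      _ = A.cup a := hufix
  have hdu : A.cdown b ≤ A.cup a := hdleast ⟨⟨bot_le, hub⟩, hu_pre⟩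
  refine ⟨⟨had, hub⟩, hdu, ?_, ?_⟩
  · calc A.cdown b = A.A1 (A.cdown b) b := hdfix.symm
      _ ≤ A.A1 (A.cdown b) (A.cup a) := A.mono1 _ b _ _ hdb hdu le_rfl hub
  · calc A.A2 (A.cdown b) (A.cup a) ≤ A.A2 a (A.cup a) := A.mono2 a _ _ _ hau hdu had le_rfl
      _ = A.cup a := hufix
end

section
/- Every partial approximation operator A on L^c has a least stable fixpoint (the well-founded fixpoint), i.e., there exists a stable fixpoint (a,b) of A such that (a,b) ≤_p (c,d) for every stable fixpoint (c,d) of A. -/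
/-!
In `L × Lᵒᵈ` the order is the precision order. The prudent pairs that lie `≤ₚ` below
every stable fixpoint form a subset of it closed under suprema of chains (the empty chain
gives `(⊥, ⊤)`). The revision `(a, b) ↦ (c↓(b), c↑(c↓(b)))` maps this subset into itself and
only increases precision, so a Zorn-maximal element is fixed by it, i.e. it is a stable
fixpoint, and it lies below every stable fixpoint by construction.
-/

variable {L : Type*} [CompleteLattice L]

open Set OrderDual

section IntervalFixedPoints

variable {f : L → L} {l r p : L}

theorem exists_fixedPoint_le_of_map_le (hf : MonotoneOn f (Icc l r)) (hl : l ≤ f l)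
    (hlp : l ≤ p) (hpr : p ≤ r) (hp : f p ≤ p) : ∃ q, l ≤ q ∧ q ≤ p ∧ f q = q := by
  set Q := {z | l ≤ z ∧ z ≤ p ∧ f z ≤ z}
  have hlq : l ≤ sInf Q := le_sInf fun z hz => hz.1
  have hqp : sInf Q ≤ p := sInf_le ⟨hlp, le_rfl, hp⟩
  have hq : sInf Q ∈ Icc l r := ⟨hlq, hqp.trans hpr⟩
  have hfq : f (sInf Q) ≤ sInf Q := le_sInf fun z hz =>
    (hf hq ⟨hz.1, hz.2.1.trans hpr⟩ (sInf_le hz)).trans hz.2.2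
  have hlfq : l ≤ f (sInf Q) := hl.trans (hf (left_mem_Icc.2 (hlp.trans hpr)) hq hlq)
  have hfqQ : f (sInf Q) ∈ Q :=
    ⟨hlfq, hfq.trans hqp, hf ⟨hlfq, hfq.trans hq.2⟩ hq hfq⟩
  exact ⟨sInf Q, hlq, hqp, hfq.antisymm (sInf_le hfqQ)⟩

theorem sInf_fixedPoints_le_of_map_le (hf : MonotoneOn f (Icc l r)) (hl : l ≤ f l)
    (hlp : l ≤ p) (hpr : p ≤ r) (hp : f p ≤ p) :
    sInf {z | l ≤ z ∧ z ≤ r ∧ f z = z} ≤ p := by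
  obtain ⟨q, hlq, hqp, hfq⟩ := exists_fixedPoint_le_of_map_le hf hl hlp hpr hp
  refine le_trans (sInf_le ?_) hqp
  exact ⟨hlq, hqp.trans hpr, hfq⟩

theorem map_sInf_fixedPoints (hf : MonotoneOn f (Icc l r)) (hl : l ≤ f l)
    (hlp : l ≤ p) (hpr : p ≤ r) (hp : f p ≤ p) :
    f (sInf {z | l ≤ z ∧ z ≤ r ∧ f z = z}) = sInf {z | l ≤ z ∧ z ≤ r ∧ f z = z} := by
  set m := sInf {z | l ≤ z ∧ z ≤ r ∧ f z = z}
  have hm : m ∈ Icc l r :=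
    ⟨le_sInf fun z hz => hz.1, (sInf_fixedPoints_le_of_map_le hf hl hlp hpr hp).trans hpr⟩
  have hfm : f m ≤ m := le_sInf fun z hz =>
    (hf hm ⟨hz.1, hz.2.1⟩ (sInf_le hz)).trans_eq hz.2.2
  have hlfm : l ≤ f m := hl.trans (hf (left_mem_Icc.2 (hm.1.trans hm.2)) hm hm.1)
  have hfm_mem : f m ∈ Icc l r := ⟨hlfm, hfm.trans hm.2⟩
  exact hfm.antisymm
    (sInf_fixedPoints_le_of_map_le hf hl hlfm hfm_mem.2 (hf hfm_mem hm hfm))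

end IntervalFixedPoints

namespace PartialApprox

variable {A : PartialApprox L} {a b c d p : L}

theorem monotoneOn_A1 (A : PartialApprox L) (b : L) : MonotoneOn (A.A1 · b) (Icc ⊥ b) :=
  fun x hx y hy hxy => A.mono1 x b y b hx.2 hy.2 hxy le_rfl

theorem monotoneOn_A2 (A : PartialApprox L) (a : L) : MonotoneOn (A.A2 a) (Icc a ⊤) :=
  fun x hx y hy hxy => A.mono2 a y a x hy.1 hx.1 le_rfl hxy

theorem cdown_eq_sInf (A : PartialApprox L) (b : L) :
    A.cdown b = sInf {z | ⊥ ≤ z ∧ z ≤ b ∧ A.A1 z b = z} := by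
  simp only [bot_le, true_and, cdown]

theorem cup_eq_sInf (A : PartialApprox L) (a : L) :
    A.cup a = sInf {z | a ≤ z ∧ z ≤ ⊤ ∧ A.A2 a z = z} := by
  simp only [le_top, true_and, cup]

theorem cdown_le_of_A1_le (hpb : p ≤ b) (hp : A.A1 p b ≤ p) : A.cdown b ≤ p := by
  rw [cdown_eq_sInf]
  exact sInf_fixedPoints_le_of_map_le (A.monotoneOn_A1 b) bot_le bot_le hpb hp

theorem A1_cdown (hpb : p ≤ b) (hp : A.A1 p b ≤ p) : A.A1 (A.cdown b) b = A.cdown b := by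
  rw [cdown_eq_sInf]
  exact map_sInf_fixedPoints (A.monotoneOn_A1 b) bot_le bot_le hpb hp

theorem self_le_cup : a ≤ A.cup a := le_sInf fun _ hz => hz.1

theorem cup_le_of_A2_le (ha : a ≤ A.A1 a a) (hap : a ≤ p) (hp : A.A2 a p ≤ p) :
    A.cup a ≤ p := by
  rw [cup_eq_sInf]
  exact sInf_fixedPoints_le_of_map_le (A.monotoneOn_A2 a) (ha.trans_eq (A.diag a)) hap le_top
    hp

theorem A2_cup (ha : a ≤ A.A1 a a) (hap : a ≤ p) (hp : A.A2 a p ≤ p) :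
    A.A2 a (A.cup a) = A.cup a := by
  rw [cup_eq_sInf]
  exact map_sInf_fixedPoints (A.monotoneOn_A2 a) (ha.trans_eq (A.diag a)) hap le_top hp

namespace reliable

variable (h : A.reliable a b)
include h

theorem A1_right_le : A.A1 b b ≤ b :=
  calc A.A1 b b = A.A2 b b := A.diag b
    _ ≤ A.A2 a b := A.mono2 a b b b h.1 le_rfl h.1 le_rfl
    _ ≤ b := h.2.2

theorem le_A1_left : a ≤ A.A1 a a :=
  h.2.1.trans (A.mono1 a b a a h.1 le_rfl le_rfl h.1)

theorem cdown_le : A.cdown b ≤ b := cdown_le_of_A1_le le_rfl h.A1_right_le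

theorem A1_cdown : A.A1 (A.cdown b) b = A.cdown b :=
  PartialApprox.A1_cdown le_rfl h.A1_right_le

theorem cup_le : A.cup a ≤ b := cup_le_of_A2_le h.le_A1_left h.1 h.2.2

theorem A2_cup : A.A2 a (A.cup a) = A.cup a :=
  PartialApprox.A2_cup h.le_A1_left h.1 h.2.2

theorem cdown_le_cdown {b' : L} (hb : b ≤ b') : A.cdown b' ≤ A.cdown b :=
  cdown_le_of_A1_le (h.cdown_le.trans hb)
    ((A.mono1 _ b' _ b (h.cdown_le.trans hb) h.cdown_le le_rfl hb).trans_eq h.A1_cdown)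

theorem reliable_cup : A.reliable a (A.cup a) :=
  ⟨self_le_cup, h.2.1.trans (A.mono1 a b a _ h.1 self_le_cup le_rfl h.cup_le), h.A2_cup.le⟩

end reliable

namespace stableFix

variable (h : A.stableFix c d)
include h

theorem A1_eq : A.A1 c d = c := by
  have := h.1.A1_cdown
  rwa [← h.2.1] at this

theorem A2_eq : A.A2 c d = d := by
  have := h.1.A2_cup
  rwa [← h.2.2] at this

theorem cdown_le (hdb : d ≤ b) : A.cdown b ≤ c :=
  cdown_le_of_A1_le (h.1.1.trans hdb)
    ((A.mono1 c b c d (h.1.1.trans hdb) h.1.1 le_rfl hdb).trans_eq h.A1_eq)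

/-- Since `c = c↓(d)`, it suffices that `c↑(a) ⊓ d` is a prefixpoint of `A.A1 (·, d)`. -/
theorem le_cup (ha : A.reliable a b) (hac : a ≤ c) : c ≤ A.cup a := by
  set q := A.cup a ⊓ d
  have hqd : q ≤ d := inf_le_right
  have haq : a ≤ q := le_inf self_le_cup (hac.trans h.1.1)
  have hq_cup : A.A1 q d ≤ A.cup a :=
    calc A.A1 q d ≤ A.A1 q q := A.mono1 q d q q hqd le_rfl le_rfl hqd
      _ = A.A2 q q := A.diag q
      _ ≤ A.A2 a q := A.mono2 a q q q haq le_rfl haq le_rfl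
      _ ≤ A.A2 a (A.cup a) := A.mono2 a _ a q self_le_cup haq le_rfl inf_le_left
      _ = A.cup a := ha.A2_cup
  have hq_d : A.A1 q d ≤ d :=
    calc A.A1 q d ≤ A.A1 d d := A.mono1 q d d d hqd le_rfl hqd le_rfl
      _ = A.A2 d d := A.diag d
      _ ≤ A.A2 c d := A.mono2 c d d d h.1.1 le_rfl h.1.1 le_rfl
      _ = d := h.A2_eq
  calc c = A.cdown d := h.2.1
    _ ≤ q := cdown_le_of_A1_le hqd (le_inf hq_cup hq_d)
    _ ≤ A.cup a := inf_le_left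

theorem right_le_cup (ha : A.reliable a b) (hac : a ≤ c) : d ≤ A.cup a :=
  h.2.2.trans_le <| cup_le_of_A2_le h.1.le_A1_left (h.le_cup ha hac)
    ((A.mono2 a _ c _ self_le_cup (h.le_cup ha hac) hac le_rfl).trans_eq ha.A2_cup)

end stableFix

namespace prudent

variable (h : A.prudent a b)
include h

theorem reliable_cdown : A.reliable (A.cdown b) b :=
  ⟨h.1.cdown_le, h.1.A1_cdown.ge, (A.mono2 a b _ b h.1.1 h.1.cdown_le h.2 le_rfl).trans h.1.2.2⟩

theorem prudent_revise : A.prudent (A.cdown b) (A.cup (A.cdown b)) :=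
  have h' := h.reliable_cdown
  ⟨h'.reliable_cup, h'.reliable_cup.cdown_le_cdown h'.cup_le⟩

theorem revise_le_of_stableFix (hcd : A.stableFix c d) (hdb : d ≤ b) :
    A.cdown b ≤ c ∧ d ≤ A.cup (A.cdown b) :=
  ⟨hcd.cdown_le hdb, hcd.right_le_cup h.reliable_cdown (hcd.cdown_le hdb)⟩

end prudent

theorem prudent_sSup_of_isChain {s : Set (L × Lᵒᵈ)} (hs : IsChain (· ≤ ·) s)
    (hp : ∀ q ∈ s, A.prudent q.1 (ofDual q.2)) : A.prudent (sSup s).1 (ofDual (sSup s).2) := by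
  set a := (sSup s).1
  set b := ofDual (sSup s).2
  have le_a (q) (hq : q ∈ s) : q.1 ≤ a := (le_sSup hq : q ≤ sSup s).1
  have b_le (q) (hq : q ∈ s) : b ≤ ofDual q.2 := (le_sSup hq : q ≤ sSup s).2
  have a_le {x : L} (hx : ∀ q ∈ s, q.1 ≤ x) : a ≤ x := by
    rw [show a = _ from Prod.fst_sSup s]
    exact sSup_le (forall_mem_image.2 hx)
  have le_b {x : L} (hx : ∀ q ∈ s, x ≤ ofDual q.2) : x ≤ b := by
    rw [show b = _ from congrArg ofDual (Prod.snd_sSup s)]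
    exact le_sInf (forall_mem_image.2 hx)
  have hab : a ≤ b := a_le fun q hq => le_b fun r hr => by
    rcases hs.total hq hr with hqr | hrq
    · exact hqr.1.trans (hp r hr).1.1
    · exact (hp q hq).1.1.trans hrq.2
  have hrel : A.reliable a b :=
    ⟨hab,
      a_le fun q hq => (hp q hq).1.2.1.trans
        (A.mono1 _ _ a b (hp q hq).1.1 hab (le_a q hq) (b_le q hq)),
      le_b fun q hq => (A.mono2 _ _ a b (hp q hq).1.1 hab (le_a q hq) (b_le q hq)).trans
        (hp q hq).1.2.2⟩
  exact ⟨hrel, a_le fun q hq => (hp q hq).2.trans (hrel.cdown_le_cdown (b_le q hq))⟩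

end PartialApprox

theorem stmt12 (A : PartialApprox L) :
    ∃ a b : L, A.stableFix a b ∧ ∀ c d : L, A.stableFix c d → a ≤ c ∧ d ≤ b := by
  set P : Set (L × Lᵒᵈ) :=
    {p | A.prudent p.1 (ofDual p.2) ∧ ∀ c d, A.stableFix c d → p ≤ (c, toDual d)}
  obtain ⟨m, ⟨hprud, hbelow⟩, hmax⟩ := zorn_le₀ P fun s hsP hs =>
    ⟨sSup s, ⟨A.prudent_sSup_of_isChain hs fun q hq => (hsP hq).1,
      fun c d hcd => sSup_le fun q hq => (hsP hq).2 c d hcd⟩, fun _ => le_sSup⟩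
  set a := m.1
  set b := ofDual m.2
  have hrev : (A.cdown b, toDual (A.cup (A.cdown b))) ∈ P :=
    ⟨hprud.prudent_revise, fun c d hcd => hprud.revise_le_of_stableFix hcd (hbelow c d hcd).2⟩
  have hrev_le : (A.cdown b, toDual (A.cup (A.cdown b))) ≤ m :=
    hmax hrev ⟨hprud.2, hprud.reliable_cdown.cup_le⟩
  have ha_eq : a = A.cdown b := le_antisymm hprud.2 hrev_le.1
  have hb_eq : b = A.cup a := ha_eq ▸ le_antisymm hrev_le.2 hprud.reliable_cdown.cup_le
  exact ⟨a, b, ⟨hprud.1, ha_eq, hb_eq⟩,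
    fun c d hcd => ⟨(hbelow c d hcd).1, (hbelow c d hcd).2⟩⟩
end

section
/- The well-founded fixpoint of a partial approximation operator A is at least as precise as its Kripke-Kleene fixpoint: KK(A) ≤_p WF(A), where KK(A) is the least fixpoint of A on (L^c, ≤_p) and WF(A) is the least stable fixpoint of A. -/
variable {L : Type*} [CompleteLattice L]

/-!
A stable fixpoint `(x, y)` is a fixpoint of `A`: since `x = c↓(y)` lies below every fixpoint of
`A¹(·, y)` in `[⊥, y]`, monotonicity gives `A¹(x, y) ≤ c↓(y) = x`; and reliability of `(x, y)`
makes `A²(x, ·)` a monotone self-map of `[x, y]`, so the Knaster–Tarski argument shows that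
`c↑(x)` is a fixpoint of `A²(x, ·)`.
-/

open Set

section KnasterTarski

variable {f : L → L} {a b : L}

theorem map_sInf_prefixedPoints_Ici_eq (hf : MonotoneOn f (Ici a)) (hab : a ≤ b) (hb : f b ≤ b)
    (ha : ∀ z ∈ Icc a b, a ≤ f z) :
    f (sInf {z | a ≤ z ∧ f z ≤ z}) = sInf {z | a ≤ z ∧ f z ≤ z} := by
  set p := sInf {z | a ≤ z ∧ f z ≤ z}
  have hap : a ≤ p := le_sInf fun z hz => hz.1
  have hpb : p ≤ b := sInf_le ⟨hab, hb⟩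
  have hfp : f p ≤ p := le_sInf fun z ⟨haz, hz⟩ => (hf hap haz (sInf_le ⟨haz, hz⟩)).trans hz
  have hafp : a ≤ f p := ha p ⟨hap, hpb⟩
  exact le_antisymm hfp (sInf_le ⟨hafp, hf hafp hap hfp⟩)

theorem map_sInf_fixedPoints_Ici_eq (hf : MonotoneOn f (Ici a)) (hab : a ≤ b) (hb : f b ≤ b)
    (ha : ∀ z ∈ Icc a b, a ≤ f z) :
    f (sInf {z | a ≤ z ∧ f z = z}) = sInf {z | a ≤ z ∧ f z = z} := by
  have hfix := map_sInf_prefixedPoints_Ici_eq hf hab hb ha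
  have hap : a ≤ sInf {z | a ≤ z ∧ f z ≤ z} := le_sInf fun z hz => hz.1
  have heq : sInf {z | a ≤ z ∧ f z = z} = sInf {z | a ≤ z ∧ f z ≤ z} :=
    le_antisymm (sInf_le ⟨hap, hfix⟩) (sInf_le_sInf fun z hz => ⟨hz.1, hz.2.le⟩)
  rw [heq, hfix]

end KnasterTarski

namespace PartialApprox

variable (A : PartialApprox L) {a b : L}

theorem monotoneOn_A2_Ici (a : L) : MonotoneOn (A.A2 a) (Ici a) :=
  fun _ hy _ hz hyz => A.mono2 a _ a _ hz hy le_rfl hyz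

theorem A1_le_cdown (hab : a ≤ b) (ha : a ≤ A.cdown b) : A.A1 a b ≤ A.cdown b :=
  le_sInf fun z ⟨hzb, hz⟩ => hz ▸ A.mono1 a b z b hab hzb (ha.trans (sInf_le ⟨hzb, hz⟩)) le_rfl

variable {A}

theorem reliable.A2_cup_s13 (h : A.reliable a b) : A.A2 a (A.cup a) = A.cup a := by
  obtain ⟨hab, ha, hb⟩ := h
  refine map_sInf_fixedPoints_Ici_eq (A.monotoneOn_A2_Ici a) hab hb fun z ⟨haz, hzb⟩ => ?_
  calc a ≤ A.A1 a b := ha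
    _ ≤ A.A1 a z := A.mono1 a b a z hab haz le_rfl hzb
    _ ≤ A.A2 a z := A.cons a z haz

theorem stableFix.A1_eq_s13 {x y : L} (h : A.stableFix x y) : A.A1 x y = x := by
  obtain ⟨⟨hxy, hx, -⟩, hcd, -⟩ := h
  exact le_antisymm ((A.A1_le_cdown hxy hcd.le).trans hcd.ge) hx

theorem stableFix.A2_eq_s13 {x y : L} (h : A.stableFix x y) : A.A2 x y = y := by
  obtain ⟨hrel, -, hcu⟩ := h
  rw [hcu]
  exact hrel.A2_cup_s13

end PartialApprox

theorem stmt13_general (A : PartialApprox L) (k1 k2 w1 w2 : L)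
    (hkleast : ∀ x y : L, x ≤ y → A.A1 x y = x → A.A2 x y = y → k1 ≤ x ∧ y ≤ k2)
    (hw : A.stableFix w1 w2) :
    k1 ≤ w1 ∧ w2 ≤ k2 :=
  hkleast w1 w2 hw.1.1 hw.A1_eq_s13 hw.A2_eq_s13

theorem stmt13 (A : PartialApprox L) (k1 k2 w1 w2 : L)
    (hkfix : k1 ≤ k2 ∧ A.A1 k1 k2 = k1 ∧ A.A2 k1 k2 = k2)
    (hkleast : ∀ x y : L, x ≤ y → A.A1 x y = x → A.A2 x y = y → k1 ≤ x ∧ y ≤ k2)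
    (hw : A.stableFix w1 w2)
    (hwleast : ∀ x y : L, A.stableFix x y → w1 ≤ x ∧ y ≤ w2) :
    k1 ≤ w1 ∧ w2 ≤ k2 :=
  stmt13_general A k1 k2 w1 w2 hkleast hw
end
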